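/- arXiv:1310.7834 — 4 statements merged into one kernel-verified Lean document; each statement's English description precedes it below -/
import Mathlib

section
/- Let (x,y) be a fractional solution to a matroid median instance with ∑_{i∈𝓕} x_{ij} = 1 for every client j, and write C̄_j = ∑_{i∈𝓕} c(i,j) x_{ij}. Then there exist a subset D ⊆ 𝓓 and a map σ : 𝓓 → D with σ(j) = j for every j ∈ D such that: (i) c(j,k) ≥ 4·max(C̄_j, C̄_k) for all distinct j, k ∈ D; (ii) C̄_{σ(j)} ≤ C̄_j and c(j, σ(j)) ≤ 4·C̄_j for every j ∈ 𝓓, so that, setting d'_k = ∑_{j : σ(j)=k} d_j, one has ∑_{k∈D} d'_k C̄_k ≤ ∑_{j∈𝓓} d_j C̄_j; and (iii) for every set F ⊆ 𝓕 and every assignment a : D → F, the assignment j ↦ a(σ(j)) of the original clients satisfies ∑_{j∈𝓓} d_j c(a(σ(j)), j) ≤ ∑_{k∈D} d'_k c(a(k), k) + 4·∑_{j∈𝓓} d_j C̄_j. -/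
/-!
Process the clients in increasing order of `C̄` and make a client a center unless it lies within
`4 C̄_j` of a center already chosen; otherwise send it to such a center. Centers chosen later have
larger `C̄`, which gives the separation (i), and the distance bound (ii) holds by construction
(for a center, `c(j,j) ≤ 2 C̄_j` by averaging `c(j,j) ≤ 2 c(i,j)` against `x_{·j}`). Then (iii) is the
triangle inequality `c(a(σ j), j) ≤ c(a(σ j), σ j) + c(σ j, j)` summed over the fibres of `σ`.
-/

open scoped Classical
open Finset

/-- The rank function of a matroid: the maximum cardinality of an independent
subset of the given set. -/
noncomputable def matroidRank {α : Type*} (M : Matroid α) (S : Finset α) : ℕ :=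
  (S.powerset.filter (fun I : Finset α => M.Indep ↑I)).sup Finset.card

open Function

section Consolidation

variable {α β : Type*} [LinearOrder β]

structure IsConsolidation (r : α → β) (δ : α → α → β) (s S : Finset α) (σ : α → α) : Prop where
  subset : S ⊆ s
  mapsTo : ∀ j ∈ s, σ j ∈ S
  fixed : ∀ j ∈ S, σ j = j
  radius_le : ∀ j ∈ s, r (σ j) ≤ r j
  dist_le : ∀ j ∈ s, j ∉ S → δ j (σ j) ≤ r j
  separated : ∀ j ∈ S, ∀ k ∈ S, j ≠ k → max (r j) (r k) < δ j k

namespace IsConsolidation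

variable {r : α → β} {δ : α → α → β} {s S : Finset α} {σ : α → α} {a : α}

theorem empty : IsConsolidation r δ ∅ ∅ id where
  subset := subset_refl _
  mapsTo := by simp
  fixed := by simp
  radius_le := by simp
  dist_le := by simp
  separated := by simp

theorem insert_of_dist_le (h : IsConsolidation r δ s S σ) (ha : a ∉ s)
    (hmax : ∀ x ∈ s, r x ≤ r a) {k : α} (hk : k ∈ S) (hak : δ a k ≤ r a) :
    IsConsolidation r δ (insert a s) S (update σ a k) where
  subset := h.subset.trans (subset_insert a s)
  mapsTo j hj := by
    rcases mem_insert.mp hj with rfl | hj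
    · simpa using hk
    · simpa [ne_of_mem_of_not_mem hj ha] using h.mapsTo j hj
  fixed j hj := by
    simpa [ne_of_mem_of_not_mem (h.subset hj) ha] using h.fixed j hj
  radius_le j hj := by
    rcases mem_insert.mp hj with rfl | hj
    · simpa using hmax k (h.subset hk)
    · simpa [ne_of_mem_of_not_mem hj ha] using h.radius_le j hj
  dist_le j hj hjS := by
    rcases mem_insert.mp hj with rfl | hj
    · simpa using hak
    · simpa [ne_of_mem_of_not_mem hj ha] using h.dist_le j hj hjS
  separated := h.separated

theorem insert_center (h : IsConsolidation r δ s S σ) (hδ : ∀ j k, δ j k = δ k j) (ha : a ∉ s)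
    (hmax : ∀ x ∈ s, r x ≤ r a) (hfar : ∀ k ∈ S, r a < δ a k) :
    IsConsolidation r δ (insert a s) (insert a S) (update σ a a) where
  subset := insert_subset_insert a h.subset
  mapsTo j hj := by
    rcases mem_insert.mp hj with rfl | hj
    · simp
    · simpa [ne_of_mem_of_not_mem hj ha] using mem_insert_of_mem (h.mapsTo j hj)
  fixed j hj := by
    rcases mem_insert.mp hj with rfl | hj
    · simp
    · simpa [ne_of_mem_of_not_mem (h.subset hj) ha] using h.fixed j hj
  radius_le j hj := by
    rcases mem_insert.mp hj with rfl | hj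
    · simp
    · simpa [ne_of_mem_of_not_mem hj ha] using h.radius_le j hj
  dist_le j hj hjS := by
    have hj : j ∈ s := (mem_insert.mp hj).resolve_left (by rintro rfl; simp at hjS)
    simpa [ne_of_mem_of_not_mem hj ha] using
      h.dist_le j hj fun hjS' => hjS (mem_insert_of_mem hjS')
  separated j hj k hk hjk := by
    rcases mem_insert.mp hj with rfl | hjS <;> rcases mem_insert.mp hk with rfl | hkS
    · exact absurd rfl hjk
    · simpa [max_eq_left (hmax k (h.subset hkS))] using hfar k hkS
    · simpa [hδ j, max_eq_right (hmax j (h.subset hjS))] using hfar j hjS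
    · exact h.separated j hjS k hkS hjk

end IsConsolidation

theorem exists_isConsolidation (r : α → β) {δ : α → α → β} (hδ : ∀ j k, δ j k = δ k j)
    (s : Finset α) : ∃ S σ, IsConsolidation r δ s S σ := by
  induction s using Finset.induction_on_max_value r with
  | empty => exact ⟨∅, id, .empty⟩
  | insert a s ha hmax ih =>
    obtain ⟨S, σ, h⟩ := ih
    by_cases hnear : ∃ k ∈ S, δ a k ≤ r a
    · obtain ⟨k, hk, hak⟩ := hnear
      exact ⟨S, update σ a k, h.insert_of_dist_le ha hmax hk hak⟩
    · push Not at hnear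
      exact ⟨insert a S, update σ a a, h.insert_center hδ ha hmax hnear⟩

end Consolidation

section Pseudometric

variable {γ : Type*} {c : γ → γ → ℝ}

theorem self_le_two_mul_of_symm_of_triangle (hc_symm : ∀ u v, c u v = c v u)
    (hc_tri : ∀ u v w, c u w ≤ c u v + c v w) (u v : γ) : c v v ≤ 2 * c u v := by
  linarith [hc_tri v u v, hc_symm v u]

theorem self_le_two_mul_sum_of_sum_eq_one {ι : Type*} (t : Finset ι) (p : ι → γ) {q : ι → ℝ}
    (hq : ∀ i ∈ t, 0 ≤ q i) (hq1 : ∑ i ∈ t, q i = 1) (hc_symm : ∀ u v, c u v = c v u)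
    (hc_tri : ∀ u v w, c u w ≤ c u v + c v w) (v : γ) :
    c v v ≤ 2 * ∑ i ∈ t, c (p i) v * q i := by
  calc c v v = ∑ i ∈ t, c v v * q i := by rw [← mul_sum, hq1, mul_one]
    _ ≤ ∑ i ∈ t, 2 * c (p i) v * q i := by
      gcongr with i hi
      · exact hq i hi
      · exact self_le_two_mul_of_symm_of_triangle hc_symm hc_tri _ _
    _ = 2 * ∑ i ∈ t, c (p i) v * q i := by simp only [mul_sum, mul_assoc]

end Pseudometric

theorem sum_fiber_sum_mul_eq_sum {ι κ : Type*} [Fintype ι] {σ : ι → κ} {S : Finset κ}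
    (hσ : ∀ j, σ j ∈ S) (d : ι → ℝ) (g : κ → ℝ) :
    ∑ k ∈ S, (∑ j ∈ univ.filter (fun j => σ j = k), d j) * g k = ∑ j, d j * g (σ j) := by
  rw [← sum_fiberwise_of_maps_to (fun j _ => hσ j) (fun j => d j * g (σ j))]
  refine sum_congr rfl fun k _ => ?_
  rw [sum_mul]
  exact sum_congr rfl fun j hj => by rw [(mem_filter.mp hj).2]

theorem matroid_median_demand_consolidation_general
    {F D : Type*} [Fintype F] [Fintype D]
    (c : F ⊕ D → F ⊕ D → ℝ)
    (hc_nonneg : ∀ u v, 0 ≤ c u v)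
    (hc_symm : ∀ u v, c u v = c v u)
    (hc_tri : ∀ u v w, c u w ≤ c u v + c v w)
    (d : D → ℝ) (hd : ∀ j, 0 ≤ d j)
    (x : F → D → ℝ)
    (hx : ∀ i j, 0 ≤ x i j)
    (hx1 : ∀ j, ∑ i, x i j = 1)
    (Cbar : D → ℝ)
    (hCbar : ∀ j, Cbar j = ∑ i, c (Sum.inl i) (Sum.inr j) * x i j) :
    ∃ (D0 : Finset D) (σ : D → D),
      (∀ j, σ j ∈ D0) ∧ (∀ j ∈ D0, σ j = j) ∧
      -- (i) separation of the centers
      (∀ j ∈ D0, ∀ k ∈ D0, j ≠ k →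
        4 * max (Cbar j) (Cbar k) ≤ c (Sum.inr j) (Sum.inr k)) ∧
      -- (ii) each client is moved to a nearby center with smaller LP cost
      (∀ j : D, Cbar (σ j) ≤ Cbar j ∧ c (Sum.inr j) (Sum.inr (σ j)) ≤ 4 * Cbar j) ∧
      (∑ k ∈ D0, (∑ j ∈ univ.filter (fun j => σ j = k), d j) * Cbar k ≤
        ∑ j, d j * Cbar j) ∧
      -- (iii) any assignment of the centers extends to the original clients
      (∀ (Fs : Finset F) (a : D → F), (∀ k ∈ D0, a k ∈ Fs) →
        ∑ j, d j * c (Sum.inl (a (σ j))) (Sum.inr j) ≤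
          (∑ k ∈ D0, (∑ j ∈ univ.filter (fun j => σ j = k), d j) *
            c (Sum.inl (a k)) (Sum.inr k)) + 4 * ∑ j, d j * Cbar j) := by
  obtain ⟨D0, σ, h⟩ := exists_isConsolidation (fun j => 4 * Cbar j)
    (δ := fun j k => c (.inr j) (.inr k)) (fun j k => hc_symm _ _) univ
  have hmaps j : σ j ∈ D0 := h.mapsTo j (mem_univ j)
  have hCbar_nonneg j : 0 ≤ Cbar j :=
    hCbar j ▸ sum_nonneg fun i _ => mul_nonneg (hc_nonneg _ _) (hx i j)
  have hmove j : Cbar (σ j) ≤ Cbar j ∧ c (.inr j) (.inr (σ j)) ≤ 4 * Cbar j := by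
    refine ⟨by linarith [h.radius_le j (mem_univ j)], ?_⟩
    by_cases hj : j ∈ D0
    · have := self_le_two_mul_sum_of_sum_eq_one univ Sum.inl (fun i _ => hx i j) (hx1 j)
        hc_symm hc_tri (.inr j)
      rw [h.fixed j hj]
      linarith [hCbar j, hCbar_nonneg j]
    · exact h.dist_le j (mem_univ j) hj
  refine ⟨D0, σ, hmaps, h.fixed, fun j hj k hk hjk => ?_, hmove, ?_,
    fun _ a _ => ?_⟩
  · rw [mul_max_of_nonneg _ _ (by norm_num : (0 : ℝ) ≤ 4)]
    exact (h.separated j hj k hk hjk).le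
  · rw [sum_fiber_sum_mul_eq_sum hmaps]
    gcongr with j
    exacts [hd j, (hmove j).1]
  · rw [sum_fiber_sum_mul_eq_sum hmaps, mul_sum, ← sum_add_distrib]
    gcongr with j
    rw [mul_left_comm, ← mul_add]
    gcongr
    · exact hd j
    · linarith [hc_tri (.inl (a (σ j))) (.inr (σ j)) (.inr j), hc_symm (.inr (σ j)) (.inr j),
        (hmove j).2]

/-- Demand-consolidation lemma for matroid median (Lemma 3.1 of the paper). -/
theorem matroid_median_demand_consolidation
    {F D : Type*} [Fintype F] [Fintype D]
    (c : F ⊕ D → F ⊕ D → ℝ)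
    (hc_nonneg : ∀ u v, 0 ≤ c u v)
    (hc_symm : ∀ u v, c u v = c v u)
    (hc_tri : ∀ u v w, c u w ≤ c u v + c v w)
    (f : F → ℝ) (hf : ∀ i, 0 ≤ f i)
    (d : D → ℝ) (hd : ∀ j, 0 ≤ d j)
    (M : Matroid F) (hME : M.E = Set.univ)
    (x : F → D → ℝ) (y : F → ℝ)
    (hx : ∀ i j, 0 ≤ x i j) (hy : ∀ i, 0 ≤ y i)
    (hxy : ∀ i j, x i j ≤ y i)
    (hrank : ∀ S : Finset F, ∑ i ∈ S, y i ≤ (matroidRank M S : ℝ))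
    (hx1 : ∀ j, ∑ i, x i j = 1)
    (Cbar : D → ℝ)
    (hCbar : ∀ j, Cbar j = ∑ i, c (Sum.inl i) (Sum.inr j) * x i j) :
    ∃ (D0 : Finset D) (σ : D → D),
      (∀ j, σ j ∈ D0) ∧ (∀ j ∈ D0, σ j = j) ∧
      -- (i) separation of the centers
      (∀ j ∈ D0, ∀ k ∈ D0, j ≠ k →
        4 * max (Cbar j) (Cbar k) ≤ c (Sum.inr j) (Sum.inr k)) ∧
      -- (ii) each client is moved to a nearby center with smaller LP cost
      (∀ j : D, Cbar (σ j) ≤ Cbar j ∧ c (Sum.inr j) (Sum.inr (σ j)) ≤ 4 * Cbar j) ∧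
      (∑ k ∈ D0, (∑ j ∈ univ.filter (fun j => σ j = k), d j) * Cbar k ≤
        ∑ j, d j * Cbar j) ∧
      -- (iii) any assignment of the centers extends to the original clients
      (∀ (Fs : Finset F) (a : D → F), (∀ k ∈ D0, a k ∈ Fs) →
        ∑ j, d j * c (Sum.inl (a (σ j))) (Sum.inr j) ≤
          (∑ k ∈ D0, (∑ j ∈ univ.filter (fun j => σ j = k), d j) *
            c (Sum.inl (a k)) (Sum.inr k)) + 4 * ∑ j, d j * Cbar j) :=
  matroid_median_demand_consolidation_general c hc_nonneg hc_symm hc_tri d hd x hx hx1 Cbar hCbar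
end

section
/- Every extreme point v of the polytope 𝒫 is half-integral, i.e., v_i ∈ {0, 1/2, 1} for every i ∈ 𝓕. -/
/-!
An extreme point `v` admits no nonzero direction `w` along which every constraint tight at `v`
stays tight. Suppose some coordinates of `v` are not half-integers. By submodularity of the rank,
the tight rank constraints form a lattice of sets, so they are spanned by its atoms, each the
difference of two tight sets and hence with an integral `v`-sum; the tight constraints on `F' j`
and `G j` are spanned by disjoint blocks with half-integral `v`-sums. A block with half-integral
sum contains either none or at least two of the non-half-integral coordinates, so these two
disjoint families impose too few conditions on those coordinates to rule out a nonzero `w`.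
-/

open scoped Classical
open Finset

open Topology Module

noncomputable abbrev halfIntegers : AddSubgroup ℝ := AddSubgroup.zmultiples (1 / 2)

lemma intCast_mem_halfIntegers (n : ℤ) : (n : ℝ) ∈ halfIntegers :=
  ⟨2 * n, by push_cast; ring⟩

lemma mem_zero_half_one_of_mem_halfIntegers {x : ℝ} (hx : x ∈ halfIntegers) (h0 : 0 ≤ x)
    (h1 : x ≤ 1) :
    x ∈ ({0, 1 / 2, 1} : Set ℝ) := by
  obtain ⟨k, rfl⟩ := hx
  simp only [zsmul_eq_mul] at h0 h1 ⊢
  have hk0 : 0 ≤ k := by exact_mod_cast (by linarith : (0 : ℝ) ≤ k)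
  have hk2 : k ≤ 2 := by exact_mod_cast (by linarith : (k : ℝ) ≤ 2)
  interval_cases k <;> norm_num

lemma two_le_card_filter_notMem {ι G : Type*} [AddCommGroup G] {H : AddSubgroup G}
    {v : ι → G} {Q : Finset ι} (hQ : ∑ i ∈ Q, v i ∈ H) (hne : (Q.filter (v · ∉ H)).Nonempty) :
    2 ≤ #(Q.filter (v · ∉ H)) := by
  by_contra! hlt
  have hone : #(Q.filter (v · ∉ H)) = 1 := by have := hne.card_pos; omega
  obtain ⟨x, hx⟩ := card_eq_one.1 hone
  have hsplit := sum_filter_add_sum_filter_not Q (v · ∉ H) v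
  have hrest : ∑ i ∈ Q.filter (fun i => ¬ v i ∉ H), v i ∈ H :=
    sum_mem fun i hi => not_not.1 (mem_filter.1 hi).2
  rw [hx, sum_singleton] at hsplit
  have hvx : v x ∈ H := eq_sub_of_add_eq hsplit ▸ sub_mem hQ hrest
  have hxQ : x ∈ Q.filter (v · ∉ H) := hx ▸ mem_singleton_self x
  exact (mem_filter.1 hxQ).2 hvx

theorem eq_zero_of_eventually_add_smul_mem {E : Type*} [AddCommGroup E] [Module ℝ E]
    {P : Set E} {v w : E} (hv : v ∈ P.extremePoints ℝ)
    (hw : ∀ᶠ t in 𝓝 (0 : ℝ), v + t • w ∈ P) : w = 0 := by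
  obtain ⟨ε, hε, hball⟩ := Metric.eventually_nhds_iff.1 hw
  have hmem : ∀ t, |t| < ε → v + t • w ∈ P := fun t ht => hball (by simpa using ht)
  have hseg : v ∈ openSegment ℝ (v + (ε / 2) • w) (v + (-(ε / 2)) • w) :=
    ⟨1 / 2, 1 / 2, by norm_num, by norm_num, by norm_num, by module⟩
  have hfix := hv.2 (hmem _ (by rw [abs_of_pos (by positivity)]; linarith))
    (hmem _ (by rw [abs_neg, abs_of_pos (by positivity)]; linarith)) hseg
  rw [add_eq_left, smul_eq_zero] at hfix
  exact hfix.resolve_left (by positivity)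

lemma eventually_add_mul_le {a b c : ℝ} (h : a ≤ c) (hb : a = c → b = 0) :
    ∀ᶠ t in 𝓝 (0 : ℝ), a + t * b ≤ c := by
  rcases h.lt_or_eq with h | h
  · have hcont : Filter.Tendsto (fun t : ℝ => a + t * b) (𝓝 0) (𝓝 a) := by
      simpa using ((continuous_id.mul continuous_const).const_add a).tendsto (0 : ℝ)
    exact (hcont.eventually (gt_mem_nhds h)).mono fun _ => le_of_lt
  · exact Filter.Eventually.of_forall fun t => by simp [hb h, h]

lemma eventually_le_add_mul {a b c : ℝ} (h : c ≤ a) (hb : a = c → b = 0) :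
    ∀ᶠ t in 𝓝 (0 : ℝ), c ≤ a + t * b := by
  filter_upwards [eventually_add_mul_le (a := -a) (b := -b) (c := -c) (by linarith)
    (fun h => by simp [hb (neg_inj.1 h)])] with t ht
  linarith

section BlockSums

variable {ι : Type*}

noncomputable def blockSums (𝒜 : Finset (Finset ι)) : (ι → ℝ) →ₗ[ℝ] (𝒜 → ℝ) :=
  LinearMap.pi fun A => ∑ i ∈ A.1, LinearMap.proj i

lemma blockSums_apply (𝒜 : Finset (Finset ι)) (u : ι → ℝ) (A : 𝒜) :
    blockSums 𝒜 u A = ∑ i ∈ A.1, u i := by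
  simp [blockSums]

lemma sum_blockSums {𝒜 : Finset (Finset ι)} (h𝒜 : (𝒜 : Set (Finset ι)).PairwiseDisjoint id)
    (u : ι → ℝ) : ∑ A, blockSums 𝒜 u A = ∑ i ∈ 𝒜.biUnion id, u i := by
  simp only [blockSums_apply, sum_biUnion h𝒜, id]
  exact sum_coe_sort 𝒜 fun A => ∑ i ∈ A, u i

lemma two_mul_card_le_card_biUnion {𝒜 : Finset (Finset ι)}
    (h𝒜 : (𝒜 : Set (Finset ι)).PairwiseDisjoint id) (h2 : ∀ A ∈ 𝒜, 2 ≤ #A) :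
    2 * #𝒜 ≤ #(𝒜.biUnion id) := by
  rw [card_biUnion h𝒜, mul_comm, ← smul_eq_mul]
  exact card_nsmul_le_sum _ _ _ h2

variable [Fintype ι] (s : Finset ι) (𝒜 ℬ : Finset (Finset ι))

noncomputable def blockConstraints : (ι → ℝ) →ₗ[ℝ] (𝒜 → ℝ) × (ℬ → ℝ) × (↥(sᶜ) → ℝ) :=
  (blockSums 𝒜).prod ((blockSums ℬ).prod (LinearMap.funLeft ℝ ℝ Subtype.val))

lemma blockConstraints_apply (u : ι → ℝ) :
    blockConstraints s 𝒜 ℬ u = (blockSums 𝒜 u, blockSums ℬ u, fun i : ↥(sᶜ) => u i) :=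
  rfl

lemma finrank_add_card_eq :
    finrank ℝ ((𝒜 → ℝ) × (ℬ → ℝ) × (↥(sᶜ) → ℝ)) + #s = #𝒜 + #ℬ + Fintype.card ι := by
  rw [finrank_prod, finrank_prod, finrank_fintype_fun_eq_card, finrank_fintype_fun_eq_card,
    finrank_fintype_fun_eq_card, Fintype.card_coe, Fintype.card_coe, Fintype.card_coe,
    card_compl]
  have := card_le_univ s
  omega

variable {s 𝒜 ℬ}

/-- If both families cover `s`, the total of the `𝒜`-sums and that of the `ℬ`-sums are both
the sum over `s`, so `(1, 0, 0)` is not attained. -/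
lemma not_surjective_blockConstraints (hs : s.Nonempty)
    (h𝒜 : (𝒜 : Set (Finset ι)).PairwiseDisjoint id)
    (hℬ : (ℬ : Set (Finset ι)).PairwiseDisjoint id)
    (h𝒜s : 𝒜.biUnion id = s) (hℬs : ℬ.biUnion id = s) :
    ¬ Function.Surjective (blockConstraints s 𝒜 ℬ) := by
  intro hsurj
  obtain ⟨u, hu⟩ := hsurj (fun _ => 1, 0, 0)
  simp only [blockConstraints_apply, Prod.mk.injEq] at hu
  have h𝒜sum := sum_blockSums h𝒜 u
  have hℬsum := sum_blockSums hℬ u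
  rw [hu.1, h𝒜s] at h𝒜sum
  rw [hu.2.1, hℬs] at hℬsum
  simp only [sum_const, card_univ, Fintype.card_coe, nsmul_eq_mul, mul_one,
    Pi.zero_apply] at h𝒜sum hℬsum
  have h𝒜0 : #𝒜 = 0 := by exact_mod_cast h𝒜sum.trans hℬsum.symm
  rw [card_eq_zero.1 h𝒜0, biUnion_empty] at h𝒜s
  exact hs.ne_empty h𝒜s.symm

/-- Blocks of size at least two give at most `#s` conditions on the coordinates in `s`, and
exactly `#s` only if both families cover `s`, when one of the conditions is redundant. -/
theorem exists_ne_zero_sum_eq_zero_of_pairwiseDisjoint (hs : s.Nonempty)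
    (h𝒜s : ∀ A ∈ 𝒜, A ⊆ s) (hℬs : ∀ B ∈ ℬ, B ⊆ s)
    (h𝒜 : (𝒜 : Set (Finset ι)).PairwiseDisjoint id)
    (hℬ : (ℬ : Set (Finset ι)).PairwiseDisjoint id)
    (h𝒜2 : ∀ A ∈ 𝒜, 2 ≤ #A) (hℬ2 : ∀ B ∈ ℬ, 2 ≤ #B) :
    ∃ w : ι → ℝ, w ≠ 0 ∧ (∀ i ∉ s, w i = 0) ∧ (∀ A ∈ 𝒜, ∑ i ∈ A, w i = 0) ∧
      ∀ B ∈ ℬ, ∑ i ∈ B, w i = 0 := by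
  suffices hker : LinearMap.ker (blockConstraints s 𝒜 ℬ) ≠ ⊥ by
    obtain ⟨w, hw, hw0⟩ := Submodule.exists_mem_ne_zero_of_ne_bot hker
    simp only [LinearMap.mem_ker, blockConstraints_apply, Prod.mk_eq_zero, funext_iff,
      blockSums_apply, Pi.zero_apply] at hw
    exact ⟨w, hw0, fun i hi => hw.2.2 ⟨i, mem_compl.2 hi⟩, fun A hA => hw.1 ⟨A, hA⟩,
      fun B hB => hw.2.1 ⟨B, hB⟩⟩
  have hdim := finrank_add_card_eq s 𝒜 ℬ
  have h𝒜s' : 𝒜.biUnion id ⊆ s := biUnion_subset.2 h𝒜s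
  have hℬs' : ℬ.biUnion id ⊆ s := biUnion_subset.2 hℬs
  have h𝒜c := two_mul_card_le_card_biUnion h𝒜 h𝒜2
  have hℬc := two_mul_card_le_card_biUnion hℬ hℬ2
  have h𝒜le := card_le_card h𝒜s'
  have hℬle := card_le_card hℬs'
  rcases lt_or_ge (#𝒜 + #ℬ) #s with hlt | hge
  · exact LinearMap.ker_ne_bot_of_finrank_lt (by rw [finrank_fintype_fun_eq_card]; omega)
  rw [Ne, LinearMap.ker_eq_bot, LinearMap.injective_iff_surjective_of_finrank_eq_finrank
    (by rw [finrank_fintype_fun_eq_card]; omega)]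
  exact not_surjective_blockConstraints hs h𝒜 hℬ (eq_of_subset_of_card_le h𝒜s' (by omega))
    (eq_of_subset_of_card_le hℬs' (by omega))

end BlockSums

section PartsOutside

variable {ι : Type*} (H : AddSubgroup ℝ) (v : ι → ℝ)

noncomputable def partsOutside (𝒜 : Finset (Finset ι)) : Finset (Finset ι) :=
  (𝒜.image (·.filter (v · ∉ H))).filter Finset.Nonempty

variable {H v} {𝒜 : Finset (Finset ι)} {A : Finset ι}

lemma exists_eq_filter_of_mem_partsOutside (hA : A ∈ partsOutside H v 𝒜) :
    ∃ B ∈ 𝒜, B.filter (v · ∉ H) = A ∧ A.Nonempty := by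
  simp only [partsOutside, mem_filter, mem_image] at hA
  obtain ⟨⟨B, hB, rfl⟩, hne⟩ := hA
  exact ⟨B, hB, rfl, hne⟩

lemma pairwiseDisjoint_partsOutside (h𝒜 : (𝒜 : Set (Finset ι)).PairwiseDisjoint id) :
    (partsOutside H v 𝒜 : Set (Finset ι)).PairwiseDisjoint id := by
  intro A hA A' hA' hne
  obtain ⟨B, hB, rfl, -⟩ := exists_eq_filter_of_mem_partsOutside hA
  obtain ⟨B', hB', rfl, -⟩ := exists_eq_filter_of_mem_partsOutside hA'
  exact disjoint_filter_filter (h𝒜 hB hB' fun h => hne (h ▸ rfl))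

lemma two_le_card_of_mem_partsOutside (h𝒜H : ∀ B ∈ 𝒜, ∑ i ∈ B, v i ∈ H)
    (hA : A ∈ partsOutside H v 𝒜) : 2 ≤ #A := by
  obtain ⟨B, hB, rfl, hne⟩ := exists_eq_filter_of_mem_partsOutside hA
  exact two_le_card_filter_notMem (h𝒜H B hB) hne

lemma sum_eq_zero_of_forall_mem_partsOutside {w : ι → ℝ} (hwH : ∀ i, v i ∈ H → w i = 0)
    (hw : ∀ A ∈ partsOutside H v 𝒜, ∑ i ∈ A, w i = 0) (hA : A ∈ 𝒜) : ∑ i ∈ A, w i = 0 := by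
  rw [← sum_filter_of_ne (p := (v · ∉ H)) fun i _ hwi hvi => hwi (hwH i hvi)]
  rcases (A.filter (v · ∉ H)).eq_empty_or_nonempty with hempty | hne
  · rw [hempty, sum_empty]
  · exact hw _ (mem_filter.2 ⟨mem_image_of_mem _ hA, hne⟩)

/-- A block with sum in `H` meets none or at least two of the coordinates where `v` leaves `H`,
so the previous theorem applies to those coordinates. -/
theorem exists_ne_zero_sum_eq_zero_of_sum_mem [Fintype ι] (hv : ∃ i, v i ∉ H)
    {ℬ : Finset (Finset ι)} (h𝒜 : (𝒜 : Set (Finset ι)).PairwiseDisjoint id)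
    (hℬ : (ℬ : Set (Finset ι)).PairwiseDisjoint id) (h𝒜H : ∀ A ∈ 𝒜, ∑ i ∈ A, v i ∈ H)
    (hℬH : ∀ B ∈ ℬ, ∑ i ∈ B, v i ∈ H) :
    ∃ w : ι → ℝ, w ≠ 0 ∧ (∀ i, v i ∈ H → w i = 0) ∧ (∀ A ∈ 𝒜, ∑ i ∈ A, w i = 0) ∧
      ∀ B ∈ ℬ, ∑ i ∈ B, w i = 0 := by
  have hsub : ∀ 𝒞 : Finset (Finset ι), ∀ A ∈ partsOutside H v 𝒞, A ⊆ univ.filter (v · ∉ H) := by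
    intro 𝒞 A hA
    obtain ⟨B, -, rfl, -⟩ := exists_eq_filter_of_mem_partsOutside hA
    exact filter_subset_filter _ (subset_univ B)
  obtain ⟨i, hi⟩ := hv
  obtain ⟨w, hw, hws, hw𝒜, hwℬ⟩ := exists_ne_zero_sum_eq_zero_of_pairwiseDisjoint
    ⟨i, mem_filter.2 ⟨mem_univ i, hi⟩⟩ (hsub 𝒜) (hsub ℬ) (pairwiseDisjoint_partsOutside h𝒜)
    (pairwiseDisjoint_partsOutside hℬ) (fun _ => two_le_card_of_mem_partsOutside h𝒜H)
    (fun _ => two_le_card_of_mem_partsOutside hℬH)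
  have hwH : ∀ i, v i ∈ H → w i = 0 := fun i hi => hws i (by simp [hi])
  exact ⟨w, hw, hwH, fun _ => sum_eq_zero_of_forall_mem_partsOutside hwH hw𝒜,
    fun _ => sum_eq_zero_of_forall_mem_partsOutside hwH hwℬ⟩

end PartsOutside

lemma sum_eq_zero_of_forall_exists_subset {ι M : Type*} [AddCommMonoid M] {𝒜 : Finset (Finset ι)}
    (h𝒜 : (𝒜 : Set (Finset ι)).PairwiseDisjoint id) {w : ι → M}
    (hw : ∀ A ∈ 𝒜, ∑ i ∈ A, w i = 0) {S : Finset ι} (hS : ∀ i ∈ S, ∃ A ∈ 𝒜, i ∈ A ∧ A ⊆ S) :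
    ∑ i ∈ S, w i = 0 := by
  have hcover : S = (𝒜.filter (· ⊆ S)).biUnion id := by
    ext i
    simp only [mem_biUnion, mem_filter, id]
    refine ⟨fun hi => ?_, fun ⟨A, ⟨_, hAS⟩, hiA⟩ => hAS hiA⟩
    obtain ⟨A, hA, hiA, hAS⟩ := hS i hi
    exact ⟨A, ⟨hA, hAS⟩, hiA⟩
  rw [hcover, sum_biUnion (h𝒜.subset (coe_subset.2 (filter_subset _ _)))]
  exact sum_eq_zero fun A hA => hw A (mem_filter.1 hA).1

section Atoms

variable {ι : Type*} [Fintype ι] (𝒯 : Set (Finset ι))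

/-- The atom of the Boolean algebra generated by `𝒯` that contains `i`. -/
noncomputable def atomOf (i : ι) : Finset ι := univ.filter fun j => ∀ S ∈ 𝒯, (i ∈ S ↔ j ∈ S)

noncomputable def atoms : Finset (Finset ι) :=
  (univ.filter fun i => ∃ S ∈ 𝒯, i ∈ S).image (atomOf 𝒯)

variable {𝒯}

lemma mem_atomOf_self (i : ι) : i ∈ atomOf 𝒯 i := by
  simp [atomOf]

lemma atomOf_subset {S : Finset ι} {i : ι} (hS : S ∈ 𝒯) (hi : i ∈ S) : atomOf 𝒯 i ⊆ S :=
  fun _ hj => ((mem_filter.1 hj).2 S hS).1 hi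

lemma atomOf_eq_of_mem {i j : ι} (h : j ∈ atomOf 𝒯 i) : atomOf 𝒯 j = atomOf 𝒯 i := by
  ext k
  simp only [atomOf, mem_filter, mem_univ, true_and] at h ⊢
  exact forall₂_congr fun S hS => by rw [h S hS]

lemma pairwiseDisjoint_atoms : (atoms 𝒯 : Set (Finset ι)).PairwiseDisjoint id := by
  intro A hA B hB hne
  simp only [atoms, coe_image, Set.mem_image] at hA hB
  obtain ⟨i, -, rfl⟩ := hA
  obtain ⟨j, -, rfl⟩ := hB
  refine disjoint_left.2 fun k hki hkj => hne ?_
  exact (atomOf_eq_of_mem hki).symm.trans (atomOf_eq_of_mem hkj)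

lemma exists_mem_atoms_subset {S : Finset ι} (hS : S ∈ 𝒯) {i : ι} (hi : i ∈ S) :
    ∃ A ∈ atoms 𝒯, i ∈ A ∧ A ⊆ S :=
  ⟨atomOf 𝒯 i, mem_image_of_mem _ (mem_filter.2 ⟨mem_univ i, S, hS, hi⟩), mem_atomOf_self i,
    atomOf_subset hS hi⟩

/-- The atom of `i` is `S \ T`, where `S` is the least member of `𝒯` containing `i` and `T`
is the part of `S` covered by the members of `𝒯` avoiding `i`. -/
lemma exists_sdiff_eq_of_mem_atoms (h𝒯 : IsSublattice 𝒯) (hempty : ∅ ∈ 𝒯) {A : Finset ι}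
    (hA : A ∈ atoms 𝒯) : ∃ S ∈ 𝒯, ∃ T ∈ 𝒯, T ⊆ S ∧ S \ T = A := by
  simp only [atoms, mem_image, mem_filter, mem_univ, true_and] at hA
  obtain ⟨i, ⟨S₀, hS₀, hiS₀⟩, rfl⟩ := hA
  set S := (univ.filter fun S => S ∈ 𝒯 ∧ i ∈ S).inf id
  set U := (univ.filter fun S => S ∈ 𝒯 ∧ i ∉ S).sup id
  have hS : S ∈ 𝒯 := h𝒯.infClosed.finsetInf_mem ⟨S₀, by simp [hS₀, hiS₀]⟩
    fun T hT => (mem_filter.1 hT).2.1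
  have hU : U ∈ 𝒯 := sup_induction hempty (fun _ h₁ _ h₂ => h𝒯.supClosed h₁ h₂)
    fun T hT => (mem_filter.1 hT).2.1
  have hmemS : ∀ j, j ∈ S ↔ ∀ T ∈ 𝒯, i ∈ T → j ∈ T := by simp [S, mem_inf]
  have hmemU : ∀ j, j ∈ U ↔ ∃ T ∈ 𝒯, i ∉ T ∧ j ∈ T := by simp [U, and_assoc]
  refine ⟨S, hS, S ∩ U, h𝒯.infClosed hS hU, inter_subset_left, ?_⟩
  ext j
  simp only [atomOf, mem_sdiff, mem_inter, hmemS, hmemU, mem_filter, mem_univ, true_and]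
  constructor
  · rintro ⟨hjS, hjU⟩ T hT
    exact ⟨hjS T hT, fun hjT => by_contra fun hiT => hjU ⟨hjS, T, hT, hiT, hjT⟩⟩
  · intro hj
    exact ⟨fun T hT => (hj T hT).1, fun ⟨_, T, hT, hiT, hjT⟩ => hiT ((hj T hT).2 hjT)⟩

end Atoms

lemma isSublattice_setOf_sum_eq {ι : Type*} {r : Finset ι → ℝ} {v : ι → ℝ}
    (hr : ∀ S T, r (S ∪ T) + r (S ∩ T) ≤ r S + r T) (hv : ∀ S, ∑ i ∈ S, v i ≤ r S) :
    IsSublattice {S | ∑ i ∈ S, v i = r S} := by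
  have key : ∀ S T : Finset ι, ∑ i ∈ S, v i = r S → ∑ i ∈ T, v i = r T →
      ∑ i ∈ S ∪ T, v i = r (S ∪ T) ∧ ∑ i ∈ S ∩ T, v i = r (S ∩ T) := by
    intro S T hS hT
    have := sum_union_inter (s₁ := S) (s₂ := T) (f := v)
    have := hr S T
    have := hv (S ∪ T)
    have := hv (S ∩ T)
    constructor <;> linarith
  exact ⟨fun S hS T hT => (key S T hS hT).1, fun S hS T hT => (key S T hS hT).2⟩

section MatroidRank

variable {α : Type*} (M : Matroid α)

lemma matroidRank_eq_eRk (S : Finset α) : (matroidRank M S : ℕ∞) = M.eRk S := by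
  apply le_antisymm
  · obtain ⟨I, hI, hcard⟩ := exists_mem_eq_sup (S.powerset.filter fun I : Finset α => M.Indep I)
      ⟨∅, by simp⟩ card
    rw [mem_filter, mem_powerset] at hI
    rw [matroidRank, hcard, ← Set.encard_coe_eq_coe_finsetCard]
    exact hI.2.encard_le_eRk_of_subset (coe_subset.2 hI.1)
  · refine Matroid.eRk_le_iff.2 fun I hIS hI => ?_
    lift I to Finset α using S.finite_toSet.subset hIS
    rw [Set.encard_coe_eq_coe_finsetCard, Nat.cast_le]
    exact le_sup (mem_filter.2 ⟨mem_powerset.2 (coe_subset.1 hIS), hI⟩)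

lemma matroidRank_union_add_inter_le (S T : Finset α) :
    matroidRank M (S ∪ T) + matroidRank M (S ∩ T) ≤ matroidRank M S + matroidRank M T := by
  rw [← Nat.cast_le (α := ℕ∞)]
  push_cast
  simp only [matroidRank_eq_eRk, coe_union, coe_inter]
  rw [add_comm]
  exact M.eRk_inter_add_eRk_union_le S T

lemma matroidRank_empty : matroidRank M ∅ = 0 := by
  have := matroidRank_eq_eRk M ∅
  rw [coe_empty, Matroid.eRk_empty] at this
  exact_mod_cast this

lemma matroidRank_singleton_le (i : α) : matroidRank M {i} ≤ 1 := by
  have := (matroidRank_eq_eRk M {i}).trans_le (M.eRk_le_encard _)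
  rw [coe_singleton, Set.encard_singleton] at this
  exact_mod_cast this

end MatroidRank

lemma pairwiseDisjoint_biUnion_of_subset {ι D : Type*} [Fintype D] {G : D → Finset ι}
    (hG : ∀ j k, j ≠ k → Disjoint (G j) (G k)) {𝒜 : D → Finset (Finset ι)}
    (h𝒜G : ∀ j, ∀ A ∈ 𝒜 j, A ⊆ G j) (h𝒜 : ∀ j, (𝒜 j : Set (Finset ι)).PairwiseDisjoint id) :
    ((univ.biUnion 𝒜 : Finset (Finset ι)) : Set (Finset ι)).PairwiseDisjoint id := by
  intro A hA B hB hne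
  simp only [coe_biUnion, coe_univ, Set.mem_univ, Set.iUnion_true, Set.mem_iUnion,
    mem_coe] at hA hB
  obtain ⟨j, hA⟩ := hA
  obtain ⟨k, hB⟩ := hB
  by_cases hjk : j = k
  · subst hjk
    exact h𝒜 j hA hB hne
  · exact (hG j k hjk).mono (h𝒜G j A hA) (h𝒜G k B hB)

section Polytope

variable {F D : Type*} (M : Matroid F) (F' G : D → Finset F)

def halfPolytope : Set (F → ℝ) :=
  {v | (∀ i, 0 ≤ v i) ∧ (∀ S : Finset F, ∑ i ∈ S, v i ≤ (matroidRank M S : ℝ)) ∧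
    (∀ j, (1/2 : ℝ) ≤ ∑ i ∈ F' j, v i ∧ ∑ i ∈ G j, v i ≤ 1)}

def IsTightDirection (v w : F → ℝ) : Prop :=
  (∀ i, v i = 0 → w i = 0) ∧
  (∀ S : Finset F, ∑ i ∈ S, v i = matroidRank M S → ∑ i ∈ S, w i = 0) ∧
  (∀ j, ∑ i ∈ F' j, v i = 1 / 2 → ∑ i ∈ F' j, w i = 0) ∧
  (∀ j, ∑ i ∈ G j, v i = 1 → ∑ i ∈ G j, w i = 0)

/-- The constraints on `F' j` and `G j` that are tight at `v`, as sums over disjoint blocks. -/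
noncomputable def rightBlocksAt (v : F → ℝ) (j : D) : Finset (Finset F) :=
  if ∑ i ∈ F' j, v i = 1 / 2 then
    if ∑ i ∈ G j, v i = 1 then {F' j, G j \ F' j} else {F' j}
  else if ∑ i ∈ G j, v i = 1 then {G j} else ∅

variable {M F' G}

lemma le_one_of_mem_halfPolytope {v : F → ℝ} (hv : v ∈ halfPolytope M F' G) (i : F) :
    v i ≤ 1 := by
  have := hv.2.1 {i}
  rw [sum_singleton] at this
  exact this.trans (by exact_mod_cast matroidRank_singleton_le M i)

lemma eventually_add_smul_mem_halfPolytope [Finite F] [Finite D] {v w : F → ℝ}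
    (hv : v ∈ halfPolytope M F' G) (hw : IsTightDirection M F' G v w) :
    ∀ᶠ t in 𝓝 (0 : ℝ), v + t • w ∈ halfPolytope M F' G := by
  obtain ⟨hv0, hvr, hvFG⟩ := hv
  obtain ⟨hw0, hwr, hwF, hwG⟩ := hw
  have hsum : ∀ (S : Finset F) (t : ℝ),
      ∑ i ∈ S, (v + t • w) i = ∑ i ∈ S, v i + t * ∑ i ∈ S, w i := by
    intro S t
    simp only [Pi.add_apply, Pi.smul_apply, smul_eq_mul, sum_add_distrib, mul_sum]
  simp only [halfPolytope, Set.mem_ofPred_eq, hsum]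
  refine (Filter.eventually_all.2 fun i => ?_).and
    ((Filter.eventually_all.2 fun S => ?_).and (Filter.eventually_all.2 fun j => ?_))
  · exact eventually_le_add_mul (hv0 i) (hw0 i)
  · exact eventually_add_mul_le (hvr S) (hwr S)
  · exact (eventually_le_add_mul (hvFG j).1 (hwF j)).and
      (eventually_add_mul_le (hvFG j).2 (hwG j))

variable {v : F → ℝ} {j : D} {Q : Finset F}

lemma subset_of_mem_rightBlocksAt (hFG : F' j ⊆ G j) (hQ : Q ∈ rightBlocksAt F' G v j) :
    Q ⊆ G j := by
  unfold rightBlocksAt at hQ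
  split_ifs at hQ <;> simp only [mem_insert, mem_singleton, notMem_empty] at hQ <;>
    rcases hQ with rfl | rfl <;> first | exact hFG | exact sdiff_subset | exact subset_rfl

lemma pairwiseDisjoint_rightBlocksAt :
    (rightBlocksAt F' G v j : Set (Finset F)).PairwiseDisjoint id := by
  unfold rightBlocksAt
  split_ifs <;> simp [Set.pairwiseDisjoint_insert, disjoint_sdiff]

lemma sum_mem_halfIntegers_of_mem_rightBlocksAt (hFG : F' j ⊆ G j)
    (hQ : Q ∈ rightBlocksAt F' G v j) : ∑ i ∈ Q, v i ∈ halfIntegers := by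
  have hhalf : (1 / 2 : ℝ) ∈ halfIntegers := AddSubgroup.mem_zmultiples _
  unfold rightBlocksAt at hQ
  split_ifs at hQ with hF hG hG <;> simp only [mem_insert, mem_singleton, notMem_empty] at hQ <;>
    rcases hQ with rfl | rfl
  all_goals first
    | rw [hF]; exact hhalf
    | rw [sum_sdiff_eq_sub hFG, hF, hG]; norm_num
    | rw [hG]; exact_mod_cast intCast_mem_halfIntegers 1

lemma sum_eq_zero_of_forall_mem_rightBlocksAt (hFG : F' j ⊆ G j) {w : F → ℝ}
    (hw : ∀ Q ∈ rightBlocksAt F' G v j, ∑ i ∈ Q, w i = 0) :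
    (∑ i ∈ F' j, v i = 1 / 2 → ∑ i ∈ F' j, w i = 0) ∧
      (∑ i ∈ G j, v i = 1 → ∑ i ∈ G j, w i = 0) := by
  unfold rightBlocksAt at hw
  split_ifs at hw with hF hG <;> simp only [mem_insert, mem_singleton, notMem_empty,
    forall_eq_or_imp, forall_eq] at hw
  · refine ⟨fun _ => hw.1, fun _ => ?_⟩
    rw [← sum_sdiff hFG (f := w), hw.1, hw.2, add_zero]
  all_goals tauto

theorem exists_isTightDirection [Fintype F] [Fintype D] (hFG : ∀ j, F' j ⊆ G j)
    (hdisj : ∀ j k, j ≠ k → Disjoint (G j) (G k)) (hv : v ∈ halfPolytope M F' G)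
    (hfrac : ∃ i, v i ∉ halfIntegers) : ∃ w ≠ 0, IsTightDirection M F' G v w := by
  set 𝒯 : Set (Finset F) := {S | ∑ i ∈ S, v i = matroidRank M S}
  have h𝒯 : IsSublattice 𝒯 := isSublattice_setOf_sum_eq
    (fun S T => by exact_mod_cast matroidRank_union_add_inter_le M S T) hv.2.1
  have hempty : ∅ ∈ 𝒯 := by simp [𝒯, matroidRank_empty]
  have hatoms : ∀ A ∈ atoms 𝒯, ∑ i ∈ A, v i ∈ halfIntegers := by
    intro A hA
    obtain ⟨S, hS, T, hT, hTS, rfl⟩ := exists_sdiff_eq_of_mem_atoms h𝒯 hempty hA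
    rw [sum_sdiff_eq_sub hTS, hS, hT]
    exact_mod_cast intCast_mem_halfIntegers (matroidRank M S - matroidRank M T : ℤ)
  obtain ⟨w, hw, hwH, hw𝒯, hwB⟩ := exists_ne_zero_sum_eq_zero_of_sum_mem hfrac
    pairwiseDisjoint_atoms
    (pairwiseDisjoint_biUnion_of_subset hdisj (fun j _ => subset_of_mem_rightBlocksAt (hFG j))
      fun _ => pairwiseDisjoint_rightBlocksAt)
    hatoms fun Q hQ => by
      obtain ⟨j, -, hQ⟩ := mem_biUnion.1 hQ
      exact sum_mem_halfIntegers_of_mem_rightBlocksAt (hFG j) hQ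
  have hright (j : D) := sum_eq_zero_of_forall_mem_rightBlocksAt (hFG j) fun Q hQ =>
    hwB Q (mem_biUnion.2 ⟨j, mem_univ j, hQ⟩)
  exact ⟨w, hw, fun i hi => hwH i (hi ▸ zero_mem _),
    fun S hS => sum_eq_zero_of_forall_exists_subset pairwiseDisjoint_atoms hw𝒯
      fun _ hi => exists_mem_atoms_subset hS hi,
    fun j => (hright j).1, fun j => (hright j).2⟩

end Polytope

theorem polytope_P_half_integral_general
    {F D : Type*} [Fintype F] [Fintype D]
    (M : Matroid F)
    (F' G : D → Finset F)
    (hFG : ∀ j, F' j ⊆ G j)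
    (hdisj : ∀ j k, j ≠ k → Disjoint (G j) (G k))
    (P : Set (F → ℝ))
    (hP : P = {v | (∀ i, 0 ≤ v i) ∧
      (∀ S : Finset F, ∑ i ∈ S, v i ≤ (matroidRank M S : ℝ)) ∧
      (∀ j, (1/2 : ℝ) ≤ ∑ i ∈ F' j, v i ∧ ∑ i ∈ G j, v i ≤ 1)}) :
    ∀ v ∈ P.extremePoints ℝ, ∀ i, v i ∈ ({0, 1/2, 1} : Set ℝ) := by
  change P = halfPolytope M F' G at hP
  subst hP
  intro v hv i
  have hvP : v ∈ halfPolytope M F' G := hv.1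
  have hhalf : ∀ i, v i ∈ halfIntegers := by
    by_contra! hfrac
    obtain ⟨w, hw, hdir⟩ := exists_isTightDirection hFG hdisj hvP hfrac
    exact hw (eq_zero_of_eventually_add_smul_mem hv
      (eventually_add_smul_mem_halfPolytope hvP hdir))
  exact mem_zero_half_one_of_mem_halfIntegers (hhalf i) (hvP.1 i)
    (le_one_of_mem_halfPolytope hvP i)

/-- Every extreme point of the polytope `𝒫` is half-integral. -/
theorem polytope_P_half_integral
    {F D : Type*} [Fintype F] [Fintype D]
    (M : Matroid F) (hME : M.E = Set.univ)
    (F' G : D → Finset F)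
    (hFG : ∀ j, F' j ⊆ G j)
    (hdisj : ∀ j k, j ≠ k → Disjoint (G j) (G k))
    (P : Set (F → ℝ))
    (hP : P = {v | (∀ i, 0 ≤ v i) ∧
      (∀ S : Finset F, ∑ i ∈ S, v i ≤ (matroidRank M S : ℝ)) ∧
      (∀ j, (1/2 : ℝ) ≤ ∑ i ∈ F' j, v i ∧ ∑ i ∈ G j, v i ≤ 1)}) :
    ∀ v ∈ P.extremePoints ℝ, ∀ i, v i ∈ ({0, 1/2, 1} : Set ℝ) :=
  polytope_P_half_integral_general M F' G hFG hdisj P hP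
end

section
/- Let j, k, i'', ℓ, i' be points of X and let C̄_j, C̄_k ≥ 0 be reals such that c(j,k) ≥ 4·max(C̄_j, C̄_k), c(i'',k) ≤ c(i'',j), c(ℓ,k) ≤ 2·C̄_k, and c(i',j) ≤ c(ℓ,j). Then c(i',j) ≤ 3·c(i'',j). -/
theorem secondary_facility_distance_bound_general
    {X : Type*} (c : X → X → ℝ)
    (hc_symm : ∀ u v, c u v = c v u)
    (hc_tri : ∀ u v w, c u w ≤ c u v + c v w)
    (j k i'' ℓ i' : X) (Cj Ck : ℝ)
    (h1 : 4 * max Cj Ck ≤ c j k)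
    (h2 : c i'' k ≤ c i'' j)
    (h3 : c ℓ k ≤ 2 * Ck)
    (h4 : c i' j ≤ c ℓ j) :
    c i' j ≤ 3 * c i'' j := by
  have hjk : c j k ≤ 2 * c i'' j :=
    calc c j k ≤ c j i'' + c i'' k := hc_tri j i'' k
      _ ≤ 2 * c i'' j := by rw [hc_symm j i'']; linarith
  have hCk_le : 4 * Ck ≤ c j k := by linarith [le_max_right Cj Ck]
  calc c i' j ≤ c ℓ j := h4
    _ ≤ c ℓ k + c k j := hc_tri ℓ k j
    _ ≤ 2 * Ck + c j k := by rw [hc_symm k j]; linarith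
    _ ≤ 3 / 2 * c j k := by linarith
    _ ≤ 3 * c i'' j := by linarith

/-- A metric-space inequality used in bounding the secondary-facility distance
(end of the proof of Lemma 3.2). -/
theorem secondary_facility_distance_bound
    {X : Type*} (c : X → X → ℝ)
    (hc_nonneg : ∀ u v, 0 ≤ c u v)
    (hc_symm : ∀ u v, c u v = c v u)
    (hc_tri : ∀ u v w, c u w ≤ c u v + c v w)
    (j k i'' ℓ i' : X) (Cj Ck : ℝ)
    (hCj : 0 ≤ Cj) (hCk : 0 ≤ Ck)
    (h1 : 4 * max Cj Ck ≤ c j k)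
    (h2 : c i'' k ≤ c i'' j)
    (h3 : c ℓ k ≤ 2 * Ck)
    (h4 : c i' j ≤ c ℓ j) :
    c i' j ≤ 3 * c i'' j :=
  secondary_facility_distance_bound_general c hc_symm hc_tri j k i'' ℓ i' Cj Ck h1 h2 h3 h4
end

section
/- Assume additionally that: the sets S_j for j ∈ D' are pairwise disjoint; ŷ : 𝓕 → {0, 1/2, 1} satisfies ŷ_i ≥ 1/2 for every i ∈ S_k (k ∈ D) and ŷ_{i₁(k)} = 1 whenever i₁(k) = i₂(k); writing Ĉ_k = (c(i₁(k),k) + c(i₂(k),k))/2, for every k ∈ D one has Ĉ_{ctr(k)} ≤ Ĉ_k and S_{ctr(k)} ∩ S_k ≠ ∅. Define ŷ'_i = 1/2 if i ∈ S_j for some j ∈ D' with i₁(j) ≠ i₂(j), ŷ'_i = 1 if i = i₁(j) = i₂(j) for some j ∈ D', and ŷ'_i = ŷ_i otherwise. Then H(ŷ') ≤ 2·(∑_{i∈𝓕} f_i ŷ_i + ∑_{k∈D} d'_k Ĉ_k). -/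
open scoped Classical
open Finset

/-- The pair of candidate facilities `S_k = {i₁(k), i₂(k)}` of a client. -/
def Sset {F D : Type*} [DecidableEq F] (i1 i2 : D → F) (k : D) : Finset F :=
  {i1 k, i2 k}

/-- The linear function `A_k(z)` from Step IV of the rounding procedure. -/
noncomputable def Afun {F D : Type*} [Fintype F] [DecidableEq F]
    (c : F ⊕ D → F ⊕ D → ℝ) (d' : D → ℝ) (i1 i2 : D → F) (ctr : D → D)
    (k : D) (z : F → ℝ) : ℝ :=
  if i1 k ∈ Sset i1 i2 (ctr k) then
    ∑ i ∈ Sset i1 i2 (ctr k), d' k * c (Sum.inl i) (Sum.inr k) * z i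
  else
    (∑ i ∈ Sset i1 i2 (ctr k), d' k * c (Sum.inl i) (Sum.inr k) * z i)
      + d' k * (c (Sum.inl (i1 k)) (Sum.inr k) - c (Sum.inl (i2 k)) (Sum.inr k))
        * z (i1 k)

/-- The linear function `H(z)` from Step IV of the rounding procedure. -/
noncomputable def Hfun {F D : Type*} [Fintype F] [Fintype D] [DecidableEq F]
    (c : F ⊕ D → F ⊕ D → ℝ) (f : F → ℝ) (d' : D → ℝ)
    (i1 i2 : D → F) (ctr : D → D) (z : F → ℝ) : ℝ :=
  (∑ i, f i * z i) + ∑ k, Afun c d' i1 i2 ctr k z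

/-!
Fix a client `k` with center `j = ctr k`. On `S_j` the rounded vector `ŷ'` is either `1` at the
single facility or `1/2` at each of the two, so `∑_{i ∈ S_j} c(i,k) ŷ'_i` is the average of
`c(i₁(j),k)` and `c(i₂(j),k)`. Routing through `j` and a common facility `i ∈ S_j ∩ S_k`, this
average is at most `c(i,k) + Ĉ_j ≤ c(i,k) + Ĉ_k`. If `i₁(k) ∈ S_j` take `i = i₁(k)`; otherwise
`i = i₂(k)`, and the correction term of `A_k`, which is nonpositive with `ŷ'_{i₁(k)} ≥ 1/2`,
brings `c(i₂(k),k)` back down to `Ĉ_k`. Either way `A_k(ŷ') ≤ 2 d'_k Ĉ_k`, while `ŷ' ≤ ŷ` bounds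
the facility cost.
-/

theorem avg_le_of_eq_or_eq {α : Type*} {c : α → α → ℝ}
    (hc_symm : ∀ u v, c u v = c v u) (hc_tri : ∀ u v w, c u w ≤ c u v + c v w)
    {p q i : α} (hi : i = p ∨ i = q) (j k : α) :
    (c p k + c q k) / 2 ≤ c i k + (c p j + c q j) / 2 := by
  rcases hi with rfl | rfl
  · linarith [hc_tri q j k, hc_tri j i k, hc_symm j i]
  · linarith [hc_tri p j k, hc_tri j i k, hc_symm j i]

section Rounding

variable {F D : Type*} [DecidableEq F] {i1 i2 : D → F} {D' : Finset D} {yhat yhat' : F → ℝ}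

theorem mem_Sset {k : D} {i : F} : i ∈ Sset i1 i2 k ↔ i = i1 k ∨ i = i2 k := by
  simp [Sset]

theorem rounded_of_mem_Sset
    (hy'half : ∀ j ∈ D', i1 j ≠ i2 j → ∀ i ∈ Sset i1 i2 j, yhat' i = 1/2)
    (hy'one : ∀ j ∈ D', i1 j = i2 j → yhat' (i1 j) = 1)
    {j : D} (hj : j ∈ D') {i : F} (hi : i ∈ Sset i1 i2 j) :
    yhat' i = if i1 j = i2 j then 1 else 1/2 := by
  split_ifs with he
  · obtain rfl : i = i1 j := by simpa [mem_Sset, ← he] using hi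
    exact hy'one j hj he
  · exact hy'half j hj he i hi

theorem sum_Sset_mul_rounded
    (hy'half : ∀ j ∈ D', i1 j ≠ i2 j → ∀ i ∈ Sset i1 i2 j, yhat' i = 1/2)
    (hy'one : ∀ j ∈ D', i1 j = i2 j → yhat' (i1 j) = 1)
    {j : D} (hj : j ∈ D') (g : F → ℝ) :
    ∑ i ∈ Sset i1 i2 j, g i * yhat' i = (g (i1 j) + g (i2 j)) / 2 := by
  by_cases he : i1 j = i2 j
  · rw [Sset, ← he, pair_eq_singleton, sum_singleton, hy'one j hj he]
    ring
  · rw [Sset, sum_pair he, hy'half j hj he _ (by simp [Sset]),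
      hy'half j hj he _ (by simp [Sset])]
    ring

theorem rounded_le
    (hyhalf : ∀ k : D, ∀ i ∈ Sset i1 i2 k, (1/2 : ℝ) ≤ yhat i)
    (hyfull : ∀ k : D, i1 k = i2 k → yhat (i1 k) = 1)
    (hy'half : ∀ j ∈ D', i1 j ≠ i2 j → ∀ i ∈ Sset i1 i2 j, yhat' i = 1/2)
    (hy'one : ∀ j ∈ D', i1 j = i2 j → yhat' (i1 j) = 1)
    (hy'rest : ∀ i : F, (∀ j ∈ D', i ∉ Sset i1 i2 j) → yhat' i = yhat i) (i : F) :
    yhat' i ≤ yhat i := by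
  by_cases h : ∃ j ∈ D', i ∈ Sset i1 i2 j
  swap
  · exact (hy'rest i (by simpa using h)).le
  obtain ⟨j, hj, hij⟩ := h
  rw [rounded_of_mem_Sset hy'half hy'one hj hij]
  split_ifs with he
  · obtain rfl : i = i1 j := by simpa [mem_Sset, ← he] using hij
    exact (hyfull j he).ge
  · exact hyhalf j i hij

theorem half_le_rounded
    (hy'half : ∀ j ∈ D', i1 j ≠ i2 j → ∀ i ∈ Sset i1 i2 j, yhat' i = 1/2)
    (hy'one : ∀ j ∈ D', i1 j = i2 j → yhat' (i1 j) = 1)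
    (hy'rest : ∀ i : F, (∀ j ∈ D', i ∉ Sset i1 i2 j) → yhat' i = yhat i)
    {i : F} (hi : (1/2 : ℝ) ≤ yhat i) :
    (1/2 : ℝ) ≤ yhat' i := by
  by_cases h : ∃ j ∈ D', i ∈ Sset i1 i2 j
  swap
  · rwa [hy'rest i (by simpa using h)]
  obtain ⟨j, hj, hij⟩ := h
  rw [rounded_of_mem_Sset hy'half hy'one hj hij]
  split_ifs <;> norm_num

theorem Afun_rounded_le [Fintype F]
    (c : F ⊕ D → F ⊕ D → ℝ)
    (hc_symm : ∀ u v, c u v = c v u) (hc_tri : ∀ u v w, c u w ≤ c u v + c v w)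
    (d' : D → ℝ) (ctr : D → D) {k : D} (hd : 0 ≤ d' k)
    (h12 : c (Sum.inl (i1 k)) (Sum.inr k) ≤ c (Sum.inl (i2 k)) (Sum.inr k))
    (hctr : ctr k ∈ D')
    (hcenter : c (Sum.inl (i1 (ctr k))) (Sum.inr (ctr k)) + c (Sum.inl (i2 (ctr k))) (Sum.inr (ctr k))
      ≤ c (Sum.inl (i1 k)) (Sum.inr k) + c (Sum.inl (i2 k)) (Sum.inr k))
    (hmeet : (Sset i1 i2 (ctr k) ∩ Sset i1 i2 k).Nonempty)
    (hy'half : ∀ j ∈ D', i1 j ≠ i2 j → ∀ i ∈ Sset i1 i2 j, yhat' i = 1/2)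
    (hy'one : ∀ j ∈ D', i1 j = i2 j → yhat' (i1 j) = 1)
    (hhalf : (1/2 : ℝ) ≤ yhat' (i1 k)) :
    Afun c d' i1 i2 ctr k yhat' ≤
      d' k * (c (Sum.inl (i1 k)) (Sum.inr k) + c (Sum.inl (i2 k)) (Sum.inr k)) := by
  set j := ctr k
  have havg : ∀ i ∈ Sset i1 i2 j,
      (c (Sum.inl (i1 j)) (Sum.inr k) + c (Sum.inl (i2 j)) (Sum.inr k)) / 2 ≤
        c (Sum.inl i) (Sum.inr k) +
          (c (Sum.inl (i1 k)) (Sum.inr k) + c (Sum.inl (i2 k)) (Sum.inr k)) / 2 := by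
    intro i hi
    have := avg_le_of_eq_or_eq hc_symm hc_tri
      ((mem_Sset.mp hi).imp (congrArg Sum.inl) (congrArg Sum.inl)) (Sum.inr j) (Sum.inr k)
    linarith
  rw [Afun, sum_Sset_mul_rounded hy'half hy'one hctr, ← mul_add, mul_div_assoc]
  split_ifs with h1
  · have := mul_le_mul_of_nonneg_left (havg _ h1) hd
    linarith [mul_nonneg hd (sub_nonneg.2 h12)]
  · obtain ⟨i, hi⟩ := hmeet
    obtain ⟨hij, hik⟩ := mem_inter.mp hi
    obtain rfl : i = i2 k := (mem_Sset.mp hik).resolve_left (by rintro rfl; exact h1 hij)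
    have := mul_le_mul_of_nonneg_left (havg _ hij) hd
    have : d' k * (c (Sum.inl (i1 k)) (Sum.inr k) - c (Sum.inl (i2 k)) (Sum.inr k)) * yhat' (i1 k) ≤
        d' k * (c (Sum.inl (i1 k)) (Sum.inr k) - c (Sum.inl (i2 k)) (Sum.inr k)) * (1/2) :=
      mul_le_mul_of_nonpos_left hhalf (mul_nonpos_of_nonneg_of_nonpos hd (by linarith))
    linarith

end Rounding

theorem H_le_twice_half_integral_cost_general
    {F D : Type*} [Fintype F] [Fintype D] [DecidableEq F]
    (c : F ⊕ D → F ⊕ D → ℝ)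
    (hc_symm : ∀ u v, c u v = c v u)
    (hc_tri : ∀ u v w, c u w ≤ c u v + c v w)
    (f : F → ℝ) (hf : ∀ i, 0 ≤ f i)
    (d' : D → ℝ) (hd' : ∀ k, 0 ≤ d' k)
    (i1 i2 : D → F)
    (h12 : ∀ k, c (Sum.inl (i1 k)) (Sum.inr k) ≤ c (Sum.inl (i2 k)) (Sum.inr k))
    (D' : Finset D) (ctr : D → D)
    (hctr_mem : ∀ k, ctr k ∈ D')
    (yhat : F → ℝ)
    (hyval : ∀ i, yhat i ∈ ({0, 1/2, 1} : Set ℝ))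
    (hyhalf : ∀ k : D, ∀ i ∈ Sset i1 i2 k, (1/2 : ℝ) ≤ yhat i)
    (hyfull : ∀ k : D, i1 k = i2 k → yhat (i1 k) = 1)
    (Chat : D → ℝ)
    (hChat : ∀ k, Chat k =
      (c (Sum.inl (i1 k)) (Sum.inr k) + c (Sum.inl (i2 k)) (Sum.inr k)) / 2)
    (hctrC : ∀ k, Chat (ctr k) ≤ Chat k)
    (hmeet : ∀ k, (Sset i1 i2 (ctr k) ∩ Sset i1 i2 k).Nonempty)
    (yhat' : F → ℝ)
    (hy'half : ∀ j ∈ D', i1 j ≠ i2 j → ∀ i ∈ Sset i1 i2 j, yhat' i = 1/2)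
    (hy'one : ∀ j ∈ D', i1 j = i2 j → yhat' (i1 j) = 1)
    (hy'rest : ∀ i : F, (∀ j ∈ D', i ∉ Sset i1 i2 j) → yhat' i = yhat i) :
    Hfun c f d' i1 i2 ctr yhat' ≤
      2 * ((∑ i, f i * yhat i) + ∑ k, d' k * Chat k) := by
  have hclient : ∀ k, Afun c d' i1 i2 ctr k yhat' ≤ 2 * (d' k * Chat k) := fun k => by
    have hhalf := half_le_rounded hy'half hy'one hy'rest (hyhalf k (i1 k) (by simp [Sset]))
    have := Afun_rounded_le c hc_symm hc_tri d' ctr (hd' k) (h12 k) (hctr_mem k)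
      (by linarith [hctrC k, hChat k, hChat (ctr k)]) (hmeet k) hy'half hy'one hhalf
    rw [hChat k]
    linarith
  have hfacility : ∑ i, f i * yhat' i ≤ ∑ i, f i * yhat i := sum_le_sum fun i _ =>
    mul_le_mul_of_nonneg_left (rounded_le hyhalf hyfull hy'half hy'one hy'rest i) (hf i)
  have hfacility_nonneg : 0 ≤ ∑ i, f i * yhat i := sum_nonneg fun i _ =>
    mul_nonneg (hf i) (by rcases hyval i with h | h | h <;> rw [h] <;> norm_num)
  calc Hfun c f d' i1 i2 ctr yhat'
      ≤ ∑ i, f i * yhat i + ∑ k, 2 * (d' k * Chat k) :=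
        add_le_add hfacility (sum_le_sum fun k _ => hclient k)
    _ ≤ 2 * ((∑ i, f i * yhat i) + ∑ k, d' k * Chat k) := by
        rw [← mul_sum]
        linarith

/-- Lemma 3.4: `H(ŷ')` is at most twice the cost of the half-integral
solution `(x̂, ŷ)`. -/
theorem H_le_twice_half_integral_cost
    {F D : Type*} [Fintype F] [Fintype D] [DecidableEq F]
    (c : F ⊕ D → F ⊕ D → ℝ)
    (hc_nonneg : ∀ u v, 0 ≤ c u v)
    (hc_symm : ∀ u v, c u v = c v u)
    (hc_tri : ∀ u v w, c u w ≤ c u v + c v w)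
    (f : F → ℝ) (hf : ∀ i, 0 ≤ f i)
    (d' : D → ℝ) (hd' : ∀ k, 0 ≤ d' k)
    (i1 i2 : D → F)
    (h12 : ∀ k, c (Sum.inl (i1 k)) (Sum.inr k) ≤ c (Sum.inl (i2 k)) (Sum.inr k))
    (D' : Finset D) (ctr : D → D)
    (hctr_mem : ∀ k, ctr k ∈ D') (hctr_id : ∀ j ∈ D', ctr j = j)
    -- the clusters of the cluster centers are pairwise disjoint
    (hdisj : ∀ j ∈ D', ∀ j' ∈ D', j ≠ j' →
      Disjoint (Sset i1 i2 j) (Sset i1 i2 j'))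
    (yhat : F → ℝ)
    (hyval : ∀ i, yhat i ∈ ({0, 1/2, 1} : Set ℝ))
    (hyhalf : ∀ k : D, ∀ i ∈ Sset i1 i2 k, (1/2 : ℝ) ≤ yhat i)
    (hyfull : ∀ k : D, i1 k = i2 k → yhat (i1 k) = 1)
    (Chat : D → ℝ)
    (hChat : ∀ k, Chat k =
      (c (Sum.inl (i1 k)) (Sum.inr k) + c (Sum.inl (i2 k)) (Sum.inr k)) / 2)
    (hctrC : ∀ k, Chat (ctr k) ≤ Chat k)
    (hmeet : ∀ k, (Sset i1 i2 (ctr k) ∩ Sset i1 i2 k).Nonempty)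
    (yhat' : F → ℝ)
    (hy'half : ∀ j ∈ D', i1 j ≠ i2 j → ∀ i ∈ Sset i1 i2 j, yhat' i = 1/2)
    (hy'one : ∀ j ∈ D', i1 j = i2 j → yhat' (i1 j) = 1)
    (hy'rest : ∀ i : F, (∀ j ∈ D', i ∉ Sset i1 i2 j) → yhat' i = yhat i) :
    Hfun c f d' i1 i2 ctr yhat' ≤
      2 * ((∑ i, f i * yhat i) + ∑ k, d' k * Chat k) :=
  H_le_twice_half_integral_cost_general c hc_symm hc_tri f hf d' hd' i1 i2 h12 D' ctr hctr_mem yhat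
    hyval hyhalf hyfull Chat hChat hctrC hmeet yhat' hy'half hy'one hy'rest
end
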